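/- arXiv:1611.05690 — 3 statements merged into one kernel-verified Lean document; each statement's English description precedes it below -/
import Mathlib

section
/- Lemma (key invariance): Let P ∈ 𝒫 be a shares matrix (row-stochastic, individual rows equal to basis vectors, transient block Q with Q^m → 0), and let P^∞ = lim_m P^m. Then for every subset S of corporations, P_S · P^∞ = P^∞, where P_S replaces row i of P by e_i for i ∈ S. -/
open Filter Matrix Topology
open scoped Classical

/-- The matrix of shares restricted on a set `S`: rows indexed by `S` are replaced by
canonical basis (row) vectors. -/
noncomputable def restrict {ι : Type*} [DecidableEq ι] (P : Matrix ι ι ℝ) (S : Set ι) :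
    Matrix ι ι ℝ :=
  fun i j => if i ∈ S then (if j = i then (1 : ℝ) else 0) else P i j

/-- `P ∈ 𝒫`: a shares matrix with corporation set `NS`. Entries in `[0,1]`, rows sum to `1`,
rows of individuals (indices outside `NS`) are canonical basis vectors, and the powers of the
corporation-to-corporation block `Q` tend to `0`. -/
def IsShares {ι : Type*} [Fintype ι] [DecidableEq ι]
    (NS : Set ι) (P : Matrix ι ι ℝ) : Prop :=
  (∀ i j, 0 ≤ P i j ∧ P i j ≤ 1) ∧
  (∀ i, ∑ j, P i j = 1) ∧
  (∀ i ∉ NS, ∀ j, P i j = if j = i then (1 : ℝ) else 0) ∧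
  Tendsto (fun n => (Matrix.of fun i j : NS => P i j) ^ n) atTop
    (𝓝 (0 : Matrix NS NS ℝ))

theorem mul_eq_of_tendsto_pow {M : Type*} [Monoid M] [TopologicalSpace M] [ContinuousMul M]
    [T2Space M] {a L : M} (h : Tendsto (fun n => a ^ n) atTop (𝓝 L)) : a * L = L := by
  have hsucc : Tendsto (fun n => a ^ (n + 1)) atTop (𝓝 L) := h.comp (tendsto_add_atTop_nat 1)
  have hmul : Tendsto (fun n => a * a ^ n) atTop (𝓝 (a * L)) := h.const_mul a
  simp only [← pow_succ'] at hmul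
  exact tendsto_nhds_unique hmul hsucc

theorem restrict_mul_of_mul_eq {ι : Type*} [Fintype ι] [DecidableEq ι] {P M : Matrix ι ι ℝ}
    (hPM : P * M = M) (S : Set ι) : restrict P S * M = M := by
  ext i j
  by_cases hi : i ∈ S
  · simp [mul_apply, restrict, hi]
  · simpa [mul_apply, restrict, hi] using congrFun (congrFun hPM i) j

theorem restrict_mul_limit_general {ι : Type*} [Fintype ι] [DecidableEq ι]
    (P : Matrix ι ι ℝ)
    (Pinf : Matrix ι ι ℝ) (hPinf : Tendsto (fun n => P ^ n) atTop (𝓝 Pinf))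
    (S : Set ι) :
    restrict P S * Pinf = Pinf :=
  restrict_mul_of_mul_eq (mul_eq_of_tendsto_pow hPinf) S

/-- key invariance lemma: for a shares matrix `P ∈ 𝒫` with limit
`P^∞ = lim P^m` and any subset `S` of corporations, `P_S * P^∞ = P^∞`. -/
theorem restrict_mul_limit {ι : Type*} [Fintype ι] [DecidableEq ι]
    (NS : Set ι) (P : Matrix ι ι ℝ) (hP : IsShares NS P)
    (Pinf : Matrix ι ι ℝ) (hPinf : Tendsto (fun n => P ^ n) atTop (𝓝 Pinf))
    (S : Set ι) (hS : S ⊆ NS) :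
    restrict P S * Pinf = Pinf :=
  restrict_mul_limit_general P Pinf hPinf S
end

section
/- Let P ∈ 𝒫 and let S₁ ⊇ S₂ ⊇ … ⊇ S_k be nested subsets of corporations. Then (P_{S₁})^∞ (P_{S₂})^∞ ⋯ (P_{S_k})^∞ = (P_{S_k})^∞. -/
/- Every limit `(P_S)^∞` is fixed by left multiplication with `P_S`. The row `a` of `P_T · X` is
`X a` for `a ∈ T` and `(P_S · X) a` otherwise, so for `T ⊇ S` also `P_T · (P_S)^∞ = (P_S)^∞`,
hence `(P_T)^n · (P_S)^∞ = (P_S)^∞` for all `n`, and in the limit `(P_T)^∞ · (P_S)^∞ = (P_S)^∞`.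
Multiplying these identities from the right end of the product collapses it to its last factor. -/

open Filter Matrix Topology
open scoped Classical

theorem pow_mul_eq_of_mul_eq {M : Type*} [Monoid M] {A X : M} (h : A * X = X)
    (n : ℕ) : A ^ n * X = X := by
  induction n with
  | zero => rw [pow_zero, one_mul]
  | succ n ih => rw [pow_succ, mul_assoc, h, ih]

section FixedByPowers

variable {M : Type*} [Monoid M] [TopologicalSpace M] [ContinuousMul M] [T2Space M]

theorem mul_eq_of_tendsto_pow_s11 {A L : M} (hA : Tendsto (A ^ ·) atTop (𝓝 L)) : A * L = L := by
  refine tendsto_nhds_unique (hA.const_mul A) ?_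
  simpa only [Function.comp_def, pow_succ'] using hA.comp (tendsto_add_atTop_nat 1)

theorem mul_eq_of_tendsto_pow_of_mul_eq {A L X : M} (hA : Tendsto (A ^ ·) atTop (𝓝 L))
    (h : A * X = X) : L * X = X :=
  tendsto_nhds_unique (hA.mul_const X) (by simp only [pow_mul_eq_of_mul_eq h, tendsto_const_nhds])

end FixedByPowers

theorem List.prod_mul_eq_of_forall_mul_eq {M : Type*} [Monoid M] {x : M} :
    ∀ {l : List M}, (∀ a ∈ l, a * x = x) → l.prod * x = x
  | [], _ => one_mul x
  | a :: l, h => by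
    rw [List.prod_cons, mul_assoc, List.prod_mul_eq_of_forall_mul_eq fun b hb =>
      h b (List.mem_cons_of_mem a hb), h a List.mem_cons_self]

section Restrict

variable {ι : Type*} [Fintype ι] [DecidableEq ι]

theorem restrict_mul_apply_of_mem (P X : Matrix ι ι ℝ) {S : Set ι} {a : ι} (ha : a ∈ S)
    (b : ι) : (restrict P S * X) a b = X a b := by
  simp [restrict, mul_apply, ha, ite_mul]

theorem restrict_mul_apply_of_notMem (P X : Matrix ι ι ℝ) {S : Set ι} {a : ι} (ha : a ∉ S)
    (b : ι) : (restrict P S * X) a b = (P * X) a b := by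
  simp [restrict, mul_apply, ha]

theorem restrict_mul_eq_of_subset {P X : Matrix ι ι ℝ} {S T : Set ι} (hST : S ⊆ T)
    (h : restrict P S * X = X) : restrict P T * X = X := by
  ext a b
  by_cases haT : a ∈ T
  · exact restrict_mul_apply_of_mem P X haT b
  · have haS : a ∉ S := fun haS => haT (hST haS)
    rw [restrict_mul_apply_of_notMem P X haT, ← restrict_mul_apply_of_notMem P X haS, h]

end Restrict

theorem nested_restrict_limits_prod_general {ι : Type*} [Fintype ι] [DecidableEq ι]
    (P : Matrix ι ι ℝ)
    (k : ℕ) (S : Fin (k + 1) → Set ι)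
    (hnest : ∀ i j : Fin (k + 1), i ≤ j → S j ⊆ S i)
    (Pinf : Fin (k + 1) → Matrix ι ι ℝ)
    (hPinf : ∀ i, Tendsto (fun n => (restrict P (S i)) ^ n) atTop (𝓝 (Pinf i))) :
    (List.ofFn fun i : Fin (k + 1) => Pinf i).prod = Pinf (Fin.last k) := by
  have hfix : ∀ i, Pinf i * Pinf (Fin.last k) = Pinf (Fin.last k) := fun i =>
    mul_eq_of_tendsto_pow_of_mul_eq (hPinf i) <|
      restrict_mul_eq_of_subset (hnest i _ (Fin.le_last i)) (mul_eq_of_tendsto_pow_s11 (hPinf _))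
  rw [List.ofFn_succ', List.prod_concat]
  refine List.prod_mul_eq_of_forall_mul_eq fun a ha => ?_
  obtain ⟨i, rfl⟩ := List.mem_ofFn.mp ha
  exact hfix _

/-- for nested subsets of corporations `S 0 ⊇ S 1 ⊇ … ⊇ S k`, the ordered
product of the limit matrices `(P_{S 0})^∞ ⋯ (P_{S k})^∞` equals `(P_{S k})^∞`. -/
theorem nested_restrict_limits_prod {ι : Type*} [Fintype ι] [DecidableEq ι]
    (NS : Set ι) (P : Matrix ι ι ℝ) (hP : IsShares NS P)
    (k : ℕ) (S : Fin (k + 1) → Set ι)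
    (hsub : ∀ i, S i ⊆ NS)
    (hnest : ∀ i j : Fin (k + 1), i ≤ j → S j ⊆ S i)
    (Pinf : Fin (k + 1) → Matrix ι ι ℝ)
    (hPinf : ∀ i, Tendsto (fun n => (restrict P (S i)) ^ n) atTop (𝓝 (Pinf i))) :
    (List.ofFn fun i : Fin (k + 1) => Pinf i).prod = Pinf (Fin.last k) :=
  nested_restrict_limits_prod_general P k S hnest Pinf hPinf
end

section
/- Monotonicity of negative sets: with the iteration E^{(n+1)} = E^{(n)} P_{S(E^{(n)})} and S(E) = {i ∈ N_S : E_i < 0}, the sets S(E^{(n)}) are decreasing in n: S(E^{(n+1)}) ⊆ S(E^{(n)}) for all n. -/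
open Filter Matrix Topology
open scoped Classical

section

variable {ι : Type*} [Fintype ι] [DecidableEq ι]

/-- Rows in `S` are basis vectors `e_j` with `j ≠ i`, so they contribute nothing to column `i`. -/
theorem vecMul_restrict_apply_nonneg (P : Matrix ι ι ℝ) {S : Set ι} {E : ι → ℝ} {i : ι}
    (hi : i ∉ S) (hE : ∀ j ∉ S, 0 ≤ E j * P j i) : 0 ≤ (E ᵥ* restrict P S) i := by
  refine Finset.sum_nonneg fun j _ => ?_
  by_cases hj : j ∈ S
  · have hij : i ≠ j := by rintro rfl; exact hi hj
    simp [restrict, hj, hij]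
  · simpa [restrict, hj] using hE j hj

theorem IsShares.apply_eq_zero_of_notMem {NS : Set ι} {P : Matrix ι ι ℝ} (hP : IsShares NS P)
    {i j : ι} (hj : j ∉ NS) (hij : i ≠ j) : P j i = 0 := by
  simp [hP.2.2.1 j hj, hij]

/-- A row outside the negative set contributes nonnegatively to every corporation: either its
income is nonnegative, or it is an individual, whose row of `P` is supported on itself. -/
theorem IsShares.mul_apply_nonneg_of_notMem_negative {NS : Set ι} {P : Matrix ι ι ℝ}
    (hP : IsShares NS P) {E : ι → ℝ} {i j : ι} (hi : i ∈ NS)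
    (hj : j ∉ {k | k ∈ NS ∧ E k < 0}) : 0 ≤ E j * P j i := by
  by_cases hjNS : j ∈ NS
  · have hEj : 0 ≤ E j := not_lt.mp fun h => hj ⟨hjNS, h⟩
    exact mul_nonneg hEj (hP.1 j i).1
  · have hij : i ≠ j := by rintro rfl; exact hjNS hi
    simp [hP.apply_eq_zero_of_notMem hjNS hij]

end

theorem negative_sets_decreasing_general {ι : Type*} [Fintype ι] [DecidableEq ι]
    (NS : Set ι) (P : Matrix ι ι ℝ) (hP : IsShares NS P)
    (E : ℕ → ι → ℝ)
    (hstep : ∀ n, E (n + 1) = Matrix.vecMul (E n) (restrict P {i | i ∈ NS ∧ E n i < 0}))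
    (n : ℕ) :
    {i | i ∈ NS ∧ E (n + 1) i < 0} ⊆ {i | i ∈ NS ∧ E n i < 0} := by
  rintro i ⟨hiNS, hneg⟩
  by_contra hi
  have hnonneg : 0 ≤ E (n + 1) i := by
    rw [hstep n]
    exact vecMul_restrict_apply_nonneg P hi fun j hj =>
      hP.mul_apply_nonneg_of_notMem_negative hiNS hj
  exact hneg.not_ge hnonneg

/-- the sets of corporations with negative income in the iteration
`E^{(n+1)} = E^{(n)} · P_{S(E^{(n)})}` are decreasing: `S(E^{(n+1)}) ⊆ S(E^{(n)})`. -/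
theorem negative_sets_decreasing {ι : Type*} [Fintype ι] [DecidableEq ι]
    (NS : Set ι) (P : Matrix ι ι ℝ) (hP : IsShares NS P)
    (E0 : ι → ℝ) (E : ℕ → ι → ℝ)
    (hE0 : E 0 = E0)
    (hstep : ∀ n, E (n + 1) = Matrix.vecMul (E n) (restrict P {i | i ∈ NS ∧ E n i < 0}))
    (n : ℕ) :
    {i | i ∈ NS ∧ E (n + 1) i < 0} ⊆ {i | i ∈ NS ∧ E n i < 0} :=
  negative_sets_decreasing_general NS P hP E hstep n
end
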